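/- ζ(2)² = 2ζ(2,2) + 4ζ(3,1) (shuffle relation for k = l = (2)), where ζ(a,b) = ∑_{m > n ≥ 1} 1/(m^a n^b). -/
import Mathlib

lemma pnat_sub_coe_of_lt {s n : ℕ+} (h : (n:ℕ) < (s:ℕ)) : ((s - n : ℕ+) : ℕ) = (s:ℕ) - (n:ℕ) := by
  rw [PNat.sub_coe, if_pos (by exact_mod_cast h)]

lemma pnat_sub_lt {s n : ℕ+} (h : (n:ℕ) < (s:ℕ)) : ((s - n : ℕ+) : ℕ) < (s:ℕ) := by
  rw [pnat_sub_coe_of_lt h]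
  have := n.pos; omega

lemma pnat_sub_sub {s n : ℕ+} (h : (n:ℕ) < (s:ℕ)) : s - (s - n) = n := by
  apply PNat.coe_injective
  rw [pnat_sub_coe_of_lt (pnat_sub_lt h), pnat_sub_coe_of_lt h]
  omega

/-- The index set of double zeta values. -/
abbrev DZIdx := {p : ℕ+ × ℕ+ // (p.2 : ℕ) < (p.1 : ℕ)}

/-- `(m, n) ↦ (m + n, n)` as an equivalence onto pairs `m > n`. -/
def shiftEquiv : (ℕ+ × ℕ+) ≃ DZIdx where
  toFun p := ⟨(p.1 + p.2, p.2), by simp [PNat.add_coe, p.1.pos]⟩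
  invFun q := (q.1.1 - q.1.2, q.1.2)
  left_inv p := by
    ext <;> simp [PNat.sub_coe, PNat.lt_add_left p.2 p.1]
  right_inv q := by
    obtain ⟨⟨s, n⟩, h⟩ := q
    have h' : n < s := by exact_mod_cast h
    ext <;> simp [PNat.sub_add_of_lt h']

/-- The involution `(s, n) ↦ (s, s - n)` on pairs `s > n`. -/
def flipEquiv : DZIdx ≃ DZIdx where
  toFun q := ⟨(q.1.1, q.1.1 - q.1.2), pnat_sub_lt q.2⟩
  invFun q := ⟨(q.1.1, q.1.1 - q.1.2), pnat_sub_lt q.2⟩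
  left_inv q := by
    obtain ⟨⟨s, n⟩, h⟩ := q
    simp [pnat_sub_sub h]
  right_inv q := by
    obtain ⟨⟨s, n⟩, h⟩ := q
    simp [pnat_sub_sub h]

lemma key_identity (b c : ℝ) (hb : 0 < b) (hbc : b < c) :
    1 / (c - b) ^ 2 * (1 / b ^ 2) =
      1 / (c ^ 2 * b ^ 2) + 1 / (c ^ 2 * (c - b) ^ 2) +
        2 * (1 / (c ^ 3 * b)) + 2 * (1 / (c ^ 3 * (c - b))) := by
  have h1 : c - b ≠ 0 := by linarith
  have h2 : b ≠ 0 := hb.ne'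
  have h3 : c ≠ 0 := by linarith
  field_simp
  ring

/-- The double zeta value `ζ(a, b) = ∑_{m > n ≥ 1} m^{-a} n^{-b}`. -/
noncomputable def doubleZeta (a b : ℕ) : ℝ :=
  ∑' p : {p : ℕ+ × ℕ+ // (p.2 : ℕ) < (p.1 : ℕ)},
    1 / (((p.1.1 : ℕ) : ℝ) ^ a * ((p.1.2 : ℕ) : ℝ) ^ b)

/-- The summand of `doubleZeta`. -/
noncomputable def dzf (a b : ℕ) : DZIdx → ℝ :=
  fun p => 1 / (((p.1.1 : ℕ) : ℝ) ^ a * ((p.1.2 : ℕ) : ℝ) ^ b)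

lemma doubleZeta_eq (a b : ℕ) : doubleZeta a b = ∑' p : DZIdx, dzf a b p := rfl

lemma hs2 : Summable (fun n : ℕ+ => 1 / (n : ℝ) ^ 2) :=
  ((Real.summable_one_div_nat_pow (p := 2)).2 (by norm_num)).subtype _

set_option maxHeartbeats 1000000 in
lemma hF : Summable (fun p : ℕ+ × ℕ+ => (1 / ((p.1 : ℕ) : ℝ) ^ 2) * (1 / ((p.2 : ℕ) : ℝ) ^ 2)) := by
  have hnorm : Summable (fun n : ℕ+ => ‖1 / (n : ℝ) ^ 2‖) := by
    refine hs2.congr fun n => ?_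
    rw [Real.norm_eq_abs, abs_of_nonneg (by positivity)]
  exact summable_mul_of_summable_norm hnorm hnorm

lemma hdz22 : Summable (dzf 2 2) := by
  refine (hF.subtype _).congr fun q => ?_
  simp only [Function.comp_apply, dzf]
  rw [div_mul_div_comm, one_mul]

lemma dzf_nonneg (a b : ℕ) (q : DZIdx) : 0 ≤ dzf a b q := by
  unfold dzf; positivity

lemma hdz31 : Summable (dzf 3 1) := by
  refine Summable.of_nonneg_of_le (dzf_nonneg 3 1) (fun q => ?_) hdz22
  unfold dzf
  apply one_div_le_one_div_of_le
  · have := q.1.1.pos; have := q.1.2.pos; positivity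
  · have h1 : (1:ℝ) ≤ ((q.1.1 : ℕ) : ℝ) := by exact_mod_cast q.1.1.pos
    have h2 : (1:ℝ) ≤ ((q.1.2 : ℕ) : ℝ) := by exact_mod_cast q.1.2.pos
    have h3 : ((q.1.2 : ℕ) : ℝ) ≤ ((q.1.1 : ℕ) : ℝ) := by exact_mod_cast q.2.le
    have h4 := mul_le_mul_of_nonneg_left h3 (by positivity : (0:ℝ) ≤ ((q.1.1 : ℕ) : ℝ) ^ 2 * ((q.1.2 : ℕ) : ℝ))
    nlinarith [h4]

lemma hdz22' : Summable (fun q => dzf 2 2 (flipEquiv q)) := flipEquiv.summable_iff.2 hdz22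

lemma hdz31' : Summable (fun q => dzf 3 1 (flipEquiv q)) := flipEquiv.summable_iff.2 hdz31

theorem zeta_two_sq_shuffle :
    (∑' n : ℕ+, 1 / (n : ℝ) ^ 2) ^ 2 = 2 * doubleZeta 2 2 + 4 * doubleZeta 3 1 := by
  have step1 : (∑' n : ℕ+, 1 / (n : ℝ) ^ 2) ^ 2 =
      ∑' p : ℕ+ × ℕ+, (1 / ((p.1 : ℕ) : ℝ) ^ 2) * (1 / ((p.2 : ℕ) : ℝ) ^ 2) := by
    rw [sq]
    exact Summable.tsum_mul_tsum hs2 hs2 hF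
  have step2 : (∑' p : ℕ+ × ℕ+, (1 / ((p.1 : ℕ) : ℝ) ^ 2) * (1 / ((p.2 : ℕ) : ℝ) ^ 2)) =
      ∑' q : DZIdx, (1 / (((shiftEquiv.symm q).1 : ℕ) : ℝ) ^ 2) *
        (1 / (((shiftEquiv.symm q).2 : ℕ) : ℝ) ^ 2) :=
    (shiftEquiv.symm.tsum_eq _).symm
  have step3 : ∀ q : DZIdx, (1 / (((shiftEquiv.symm q).1 : ℕ) : ℝ) ^ 2) *
      (1 / (((shiftEquiv.symm q).2 : ℕ) : ℝ) ^ 2) =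
      dzf 2 2 q + dzf 2 2 (flipEquiv q) + 2 * dzf 3 1 q + 2 * dzf 3 1 (flipEquiv q) := by
    rintro ⟨⟨s, n⟩, h⟩
    have hb : (0:ℝ) < ((n : ℕ) : ℝ) := by exact_mod_cast n.pos
    have hbc : ((n : ℕ) : ℝ) < ((s : ℕ) : ℝ) := by exact_mod_cast h
    have hsub : (((s - n : ℕ+) : ℕ) : ℝ) = ((s : ℕ) : ℝ) - ((n : ℕ) : ℝ) := by
      rw [pnat_sub_coe_of_lt h, Nat.cast_sub (le_of_lt h)]
    show (1 / (((s - n : ℕ+) : ℕ) : ℝ) ^ 2) * (1 / ((n : ℕ) : ℝ) ^ 2) = _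
    rw [hsub]
    have := key_identity ((n : ℕ) : ℝ) ((s : ℕ) : ℝ) hb hbc
    rw [this]
    simp only [dzf, flipEquiv, Equiv.coe_fn_mk]
    rw [hsub]
    norm_num
  rw [step1, step2, tsum_congr step3]
  have h12 : Summable (fun q => dzf 2 2 q + dzf 2 2 (flipEquiv q)) := hdz22.add hdz22'
  rw [Summable.tsum_add (h12.add (hdz31.mul_left 2)) (hdz31'.mul_left 2),
    Summable.tsum_add h12 (hdz31.mul_left 2), Summable.tsum_add hdz22 hdz22',
    tsum_mul_left, tsum_mul_left, Equiv.tsum_eq flipEquiv (dzf 2 2),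
    Equiv.tsum_eq flipEquiv (dzf 3 1), ← doubleZeta_eq, ← doubleZeta_eq]
  ring
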